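/- arXiv:2201.10945 — 2 statements merged into one kernel-verified Lean document; each statement's English description precedes it below -/
import Mathlib

section
/- Let $a \ge 0$, $b \ge 0$, $c \ge 0$ be real numbers with $b \ge c$, let $0 < \alpha < 1$, and suppose $\alpha a + b > 0$. Define the Tversky similarity $S_{Tve}(x) = x/(\alpha a + b + x)$ and the Jaccard index $S_{Jac}(x) = x/(a + b + x)$ as functions of the intersection size $x$ (with $a$ and $b$ held fixed). Then the derivative of $S_{Tve}$ at the point $c$ is greater than or equal to the derivative of $S_{Jac}$ at the point $c$; i.e., $\mathrm{deriv}\,(x \mapsto x/(\alpha a + b + x))\,(c) \ge \mathrm{deriv}\,(x \mapsto x/(a + b + x))\,(c)$. -/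
lemma deriv_div_linear (k c : ℝ) (hk : 0 < k) (hc : 0 ≤ c) :
    deriv (fun x : ℝ => x / (k + x)) c = k / (k + c)^2 := by
  have hne : k + c ≠ 0 := by positivity
  have h : HasDerivAt (fun x : ℝ => x / (k + x))
      ((1 * (k + c) - c * 1) / (k + c)^2) c := by
    have h2 : HasDerivAt (HAdd.hAdd k : ℝ → ℝ) 1 c := by
      exact (hasDerivAt_id c).const_add k
    exact (hasDerivAt_id c).div h2 hne
  rw [h.deriv]; ring

/-- Growth-rate comparison of the Tversky similarity and the Jaccard index:
with `a = |X - Y| ≥ 0`, `b = |Y - X| ≥ 0`, `c = |X ∩ Y| ≥ 0`, `b ≥ c`,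
`0 < α < 1`, and `α * a + b > 0`, the derivative of the Tversky similarity
`x ↦ x / (α * a + b + x)` at `c` is at least the derivative of the Jaccard
index `x ↦ x / (a + b + x)` at `c`. -/
theorem tversky_deriv_ge_jaccard_deriv
    (a b c α : ℝ) (ha : 0 ≤ a) (hb : 0 ≤ b) (hc : 0 ≤ c) (hbc : c ≤ b)
    (hα0 : 0 < α) (hα1 : α < 1) (hpos : 0 < α * a + b) :
    deriv (fun x : ℝ => x / (α * a + b + x)) c ≥
      deriv (fun x : ℝ => x / (a + b + x)) c := by
  have hk2 : 0 < a + b := by nlinarith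
  rw [deriv_div_linear _ c hpos hc, deriv_div_linear _ c hk2 hc]
  rw [ge_iff_le, div_le_div_iff₀ (by positivity) (by positivity)]
  have h1 : c ≤ α * a + b := by nlinarith
  have h2 : c ≤ a + b := by nlinarith
  nlinarith [mul_nonneg (show (0:ℝ) ≤ (a + b) - (α * a + b) by nlinarith)
    (show (0:ℝ) ≤ (α * a + b) * (a + b) - c ^ 2 by nlinarith)]
end

section
/- Let $a \ge 0$, $b > 0$ be real numbers and $0 < \alpha < 1$. Then for all real numbers $c_1, c_2$ with $0 \le c_1 \le c_2 \le b$, the increase of the Tversky similarity dominates the increase of the Jaccard index: $\dfrac{c_2}{\alpha a + b + c_2} - \dfrac{c_1}{\alpha a + b + c_1} \;\ge\; \dfrac{c_2}{a + b + c_2} - \dfrac{c_1}{a + b + c_1}$. -/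
/-! With `k = α a + b ≤ K = a + b`, both similarities are of the form `c / (k + c)`, whose
increment from `c₁` to `c₂` is `k (c₂ - c₁) / ((k + c₁) (k + c₂)) = (c₂ - c₁) / (k + c₁ + c₂ + c₁ c₂ / k)`.
The map `k ↦ k + c₁ c₂ / k` is increasing once `c₁ c₂ ≤ k K`, which holds because `c₁ ≤ c₂ ≤ b ≤ k ≤ K`;
so the smaller denominator parameter `k` of the Tversky similarity gives the larger increment. -/

theorem div_add_sub_div_add {k c₁ c₂ : ℝ} (h₁ : k + c₁ ≠ 0) (h₂ : k + c₂ ≠ 0) :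
    c₂ / (k + c₂) - c₁ / (k + c₁) = k * (c₂ - c₁) / ((k + c₁) * (k + c₂)) := by
  field_simp
  ring

theorem div_add_increment_le_of_le {k K c₁ c₂ : ℝ} (hk : 0 < k) (hkK : k ≤ K) (hc₁ : 0 ≤ c₁)
    (hc₁₂ : c₁ ≤ c₂) (hprod : c₁ * c₂ ≤ k * K) :
    c₂ / (K + c₂) - c₁ / (K + c₁) ≤ c₂ / (k + c₂) - c₁ / (k + c₁) := by
  have hc₂ : 0 ≤ c₂ := hc₁.trans hc₁₂
  have hK : 0 < K := hk.trans_le hkK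
  rw [div_add_sub_div_add (by positivity) (by positivity),
    div_add_sub_div_add (by positivity) (by positivity),
    div_le_div_iff₀ (by positivity) (by positivity)]
  have key : K * ((k + c₁) * (k + c₂)) ≤ k * ((K + c₁) * (K + c₂)) := by
    nlinarith [mul_nonneg (sub_nonneg.mpr hkK) (sub_nonneg.mpr hprod)]
  calc K * (c₂ - c₁) * ((k + c₁) * (k + c₂))
      = (c₂ - c₁) * (K * ((k + c₁) * (k + c₂))) := by ring
    _ ≤ (c₂ - c₁) * (k * ((K + c₁) * (K + c₂))) :=
        mul_le_mul_of_nonneg_left key (sub_nonneg.mpr hc₁₂)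
    _ = k * (c₂ - c₁) * ((K + c₁) * (K + c₂)) := by ring

/-- Integrated form of the growth-rate theorem: as the ACN count grows from
`c₁` to `c₂` (with `0 ≤ c₁ ≤ c₂ ≤ b`), the Tversky similarity (parameters
`0 < α < 1`, `β = 1`) increases at least as much as the Jaccard index. -/
theorem tversky_increase_ge_jaccard_increase
    (a b α : ℝ) (ha : 0 ≤ a) (hb : 0 < b) (hα0 : 0 < α) (hα1 : α < 1) :
    ∀ c₁ c₂ : ℝ, 0 ≤ c₁ → c₁ ≤ c₂ → c₂ ≤ b →
      c₂ / (α * a + b + c₂) - c₁ / (α * a + b + c₁) ≥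
        c₂ / (a + b + c₂) - c₁ / (a + b + c₁) := by
  intro c₁ c₂ hc₁ hc₁₂ hc₂b
  have hαa : 0 ≤ α * a := mul_nonneg hα0.le ha
  have hαa_le : α * a ≤ a := mul_le_of_le_one_left ha hα1.le
  have hprod : c₁ * c₂ ≤ (α * a + b) * (a + b) :=
    mul_le_mul (by linarith) (by linarith) (hc₁.trans hc₁₂) (by linarith)
  exact div_add_increment_le_of_le (by linarith) (by linarith) hc₁ hc₁₂ hprod
end
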